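/- arXiv:1204.5154 — 2 statements merged into one kernel-verified Lean document; each statement's English description precedes it below -/
import Mathlib

section
/- Let A and B be N×N complex Hermitian matrices and let z ∈ ℂ with Im(z) > 0. Then the matrices z·I_N − A and z·I_N − B are invertible and | Tr((z·I_N − A)^{-1}) − Tr((z·I_N − B)^{-1}) | ≤ 2 · rank(A − B) / Im(z). -/
/-!
A Hermitian `A` has real spectrum, so `z - A` is invertible for `Im z > 0`, and since
`Im ⟪x, (z - A) x⟫ = Im z ‖x‖²` its inverse has operator norm at most `1 / Im z`.
The resolvent identity `(z - A)⁻¹ - (z - B)⁻¹ = (z - A)⁻¹ (A - B) (z - B)⁻¹` bounds the rank of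
the difference of resolvents by `rank (A - B)`, and its operator norm is at most `2 / Im z`.
Finally, the trace of an operator is at most its rank times its operator norm: compute the trace
in an orthonormal basis of its range.
-/

open Matrix

open scoped InnerProductSpace

namespace LinearMap

theorem IsSymmetric.im_mul_norm_le_norm_smul_sub_apply {E : Type*}
    [NormedAddCommGroup E] [InnerProductSpace ℂ E] {T : E →ₗ[ℂ] E} (hT : T.IsSymmetric)
    (z : ℂ) (x : E) : z.im * ‖x‖ ≤ ‖z • x - T x‖ := by
  rcases (norm_nonneg x).eq_or_lt with hx | hx
  · rw [← hx, mul_zero]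
    exact norm_nonneg _
  have him : (⟪x, z • x - T x⟫_ℂ).im = z.im * ‖x‖ ^ 2 := by
    have hreal : (⟪x, T x⟫_ℂ).im = 0 := hT.im_inner_self_apply x
    rw [inner_sub_right, inner_smul_right, Complex.sub_im, hreal,
      inner_self_eq_norm_sq_to_K, sub_zero]
    norm_cast
    exact Complex.im_mul_ofReal _ _
  refine le_of_mul_le_mul_right ?_ hx
  calc z.im * ‖x‖ * ‖x‖ = (⟪x, z • x - T x⟫_ℂ).im := by rw [him]; ring
    _ ≤ ‖⟪x, z • x - T x⟫_ℂ‖ := (le_abs_self _).trans (Complex.abs_im_le_norm _)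
    _ ≤ ‖z • x - T x‖ * ‖x‖ := by rw [mul_comm]; exact norm_inner_le_norm _ _

theorem norm_trace_le_finrank_range_mul {𝕜 E : Type*} [RCLike 𝕜]
    [NormedAddCommGroup E] [InnerProductSpace 𝕜 E] [FiniteDimensional 𝕜 E]
    (f : E →ₗ[𝕜] E) (c : ℝ) (hf : ∀ x, ‖f x‖ ≤ c * ‖x‖) :
    ‖trace 𝕜 E f‖ ≤ Module.finrank 𝕜 (range f) * c := by
  set V := range f
  have htrace : trace 𝕜 E f = trace 𝕜 V (f.rangeRestrict ∘ₗ V.subtype) := by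
    conv_lhs => rw [← subtype_comp_codRestrict f V (mem_range_self f)]
    exact trace_comp_comm' f.rangeRestrict V.subtype
  let b := stdOrthonormalBasis 𝕜 V
  have hdiag (i) : ‖⟪b i, (f.rangeRestrict ∘ₗ V.subtype) (b i)⟫_𝕜‖ ≤ c := by
    have hbi : ‖(b i : E)‖ = 1 := b.orthonormal.1 i
    calc _ ≤ ‖b i‖ * ‖f (b i)‖ := norm_inner_le_norm _ _
      _ = ‖f (b i)‖ := by rw [b.orthonormal.1 i, one_mul]
      _ ≤ c := by simpa [hbi] using hf (b i)
  calc ‖trace 𝕜 E f‖ ≤ ∑ i, ‖⟪b i, (f.rangeRestrict ∘ₗ V.subtype) (b i)⟫_𝕜‖ := by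
        rw [htrace, trace_eq_sum_inner _ b]
        exact norm_sum_le _ _
    _ ≤ ∑ _i, c := Finset.sum_le_sum fun i _ => hdiag i
    _ = Module.finrank 𝕜 V * c := by simp

end LinearMap

namespace Matrix

variable {n 𝕜 : Type*} [Fintype n] [DecidableEq n] [RCLike 𝕜]

theorem trace_toEuclideanLin (M : Matrix n n 𝕜) :
    LinearMap.trace 𝕜 (EuclideanSpace 𝕜 n) (toEuclideanLin M) = M.trace := by
  rw [toEuclideanLin_eq_toLin_orthonormal,
    LinearMap.trace_eq_matrix_trace 𝕜 (EuclideanSpace.basisFun n 𝕜).toBasis,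
    LinearMap.toMatrix_toLin]

theorem rank_eq_finrank_range_toEuclideanLin (M : Matrix n n 𝕜) :
    M.rank = Module.finrank 𝕜 (LinearMap.range (toEuclideanLin M)) := by
  rw [toEuclideanLin_eq_toLin_orthonormal]
  exact rank_eq_finrank_range_toLin M _ _

theorem norm_trace_le_rank_mul (M : Matrix n n 𝕜) (c : ℝ)
    (hM : ∀ x, ‖toEuclideanLin M x‖ ≤ c * ‖x‖) : ‖M.trace‖ ≤ M.rank * c := by
  rw [← trace_toEuclideanLin, rank_eq_finrank_range_toEuclideanLin]
  exact LinearMap.norm_trace_le_finrank_range_mul _ c hM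

theorem rank_inv_sub_inv_le {R : Type*} [CommRing R] [StrongRankCondition R]
    {S T : Matrix n n R} (hS : IsUnit S) (hT : IsUnit T) : (S⁻¹ - T⁻¹).rank ≤ (T - S).rank := by
  have hres : S⁻¹ - T⁻¹ = S⁻¹ * (T - S) * T⁻¹ := by
    rw [mul_sub, sub_mul, mul_nonsing_inv_cancel_right _ _ ((isUnit_iff_isUnit_det T).mp hT),
      nonsing_inv_mul _ ((isUnit_iff_isUnit_det S).mp hS), one_mul]
  rw [hres]
  exact (rank_mul_le_left _ _).trans (rank_mul_le_right _ _)

theorem IsHermitian.isUnit_smul_one_sub {A : Matrix n n ℂ} (hA : A.IsHermitian) {z : ℂ}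
    (hz : z.im ≠ 0) : IsUnit (z • (1 : Matrix n n ℂ) - A) := by
  rw [← Algebra.algebraMap_eq_smul_one, ← spectrum.notMem_iff, hA.spectrum_eq_image_range]
  rintro ⟨r, -, rfl⟩
  exact hz (Complex.ofReal_im r)

theorem IsHermitian.norm_toEuclideanLin_resolvent_apply_le {A : Matrix n n ℂ}
    (hA : A.IsHermitian) {z : ℂ} (hz : 0 < z.im) (x : EuclideanSpace ℂ n) :
    ‖toEuclideanLin (z • (1 : Matrix n n ℂ) - A)⁻¹ x‖ ≤ ‖x‖ / z.im := by
  set y := toEuclideanLin (z • (1 : Matrix n n ℂ) - A)⁻¹ x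
  have hdet := (isUnit_iff_isUnit_det _).mp (hA.isUnit_smul_one_sub hz.ne')
  have hy : z • y - toEuclideanLin A y = x := by
    have hinv : toEuclideanLin (z • (1 : Matrix n n ℂ) - A) y = x := by
      rw [← LinearMap.comp_apply, ← toLpLin_mul_same, mul_nonsing_inv _ hdet, toLpLin_one,
        LinearMap.id_apply]
    simpa using hinv
  rw [le_div_iff₀ hz, mul_comm, ← hy]
  exact (isSymmetric_toEuclideanLin_iff.mpr hA).im_mul_norm_le_norm_smul_sub_apply z y

end Matrix

theorem stmt10 {N : ℕ} (A B : Matrix (Fin N) (Fin N) ℂ)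
    (hA : A.IsHermitian) (hB : B.IsHermitian) (z : ℂ) (hz : 0 < z.im) :
    IsUnit (z • (1 : Matrix (Fin N) (Fin N) ℂ) - A) ∧
    IsUnit (z • (1 : Matrix (Fin N) (Fin N) ℂ) - B) ∧
    ‖(z • (1 : Matrix (Fin N) (Fin N) ℂ) - A)⁻¹.trace -
        (z • (1 : Matrix (Fin N) (Fin N) ℂ) - B)⁻¹.trace‖ ≤
      2 * ((A - B).rank : ℝ) / z.im := by
  have hSA := hA.isUnit_smul_one_sub hz.ne'
  have hSB := hB.isUnit_smul_one_sub hz.ne'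
  refine ⟨hSA, hSB, ?_⟩
  have hrank := rank_inv_sub_inv_le hSA hSB
  rw [sub_sub_sub_cancel_left] at hrank
  set RA := (z • (1 : Matrix (Fin N) (Fin N) ℂ) - A)⁻¹
  set RB := (z • (1 : Matrix (Fin N) (Fin N) ℂ) - B)⁻¹
  have hbound (x) : ‖toEuclideanLin (RA - RB) x‖ ≤ 2 / z.im * ‖x‖ := by
    rw [map_sub, LinearMap.sub_apply]
    calc _ ≤ ‖x‖ / z.im + ‖x‖ / z.im := (norm_sub_le _ _).trans (add_le_add
            (hA.norm_toEuclideanLin_resolvent_apply_le hz x)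
            (hB.norm_toEuclideanLin_resolvent_apply_le hz x))
      _ = 2 / z.im * ‖x‖ := by ring
  rw [← trace_sub]
  calc ‖(RA - RB).trace‖ ≤ (RA - RB).rank * (2 / z.im) := norm_trace_le_rank_mul _ _ hbound
    _ ≤ ((A - B).rank : ℝ) * (2 / z.im) := by gcongr
    _ = 2 * ((A - B).rank : ℝ) / z.im := by ring
end

section
/- Fix t ≥ 0 and let U_{N,t} ∈ ℂ^N be as in the Gaussian model, with entries U_{N,t}(1),…,U_{N,t}(N). Then for every k ≥ 1 and all positive integers n_1,…,n_k, the limit lim_{N→∞} N^{k − (n_1+⋯+n_k)} · E[ ∏_{j=1}^k |U_{N,t}(j)|^{2 n_j} ] exists and equals: (1−e^{−t})^k + k·e^{−t}·(1−e^{−t})^{k−1} if n_1 = ⋯ = n_k = 1; e^{−n t}·(1−e^{−t})^{k−1} if exactly one of the n_j equals some n ≥ 2 and the remaining k−1 of them equal 1; and 0 if at least two of the n_j are ≥ 2. -/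
open MeasureTheory ProbabilityTheory Matrix Filter Topology
open scoped ENNReal

noncomputable section

/-- The standard complex Gaussian law on `ℂ` (`E|g|² = 1`): real and imaginary parts
are independent centered real Gaussians of variance `1/2`. -/
def stdCplxGaussian : Measure ℂ :=
  Measure.map (fun p : ℝ × ℝ => (p.1 : ℂ) + (p.2 : ℂ) * Complex.I)
    ((gaussianReal 0 (1 / 2)).prod (gaussianReal 0 (1 / 2)))

/-- The uniform law on `Fin N`. -/
def uniformFin (N : ℕ) : Measure (Fin N) :=
  (N : ℝ≥0∞)⁻¹ • ∑ i : Fin N, Measure.dirac i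

/-- The law of the vector `U_{N,t} = e^{-t/2} √N X_N + √(1-e^{-t}) G_N` of the Gaussian
model, where `X_N` is uniform on the canonical basis of `ℂ^N`, independent of `G_N`
whose entries are i.i.d. standard complex Gaussians. -/
def gaussModelLaw (t : ℝ) (N : ℕ) : Measure (Fin N → ℂ) :=
  Measure.map
    (fun p : Fin N × (Fin N → ℂ) => fun j =>
      ((Real.exp (-t / 2) * Real.sqrt N : ℝ) : ℂ) * (if j = p.1 then 1 else 0) +
        ((Real.sqrt (1 - Real.exp (-t)) : ℝ) : ℂ) * p.2 j)
    ((uniformFin N).prod (Measure.pi fun _ : Fin N => stdCplxGaussian))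

/-- The `i`-th entry (`0`-indexed) of a vector in `ℂ^N`, extended by `0`. -/
def entryV {N : ℕ} (u : Fin N → ℂ) (i : ℕ) : ℂ :=
  if h : i < N then u ⟨i, h⟩ else 0

/-!
Conditionally on `X_N = e_i` the coordinates of `U_{N,t}` are independent, so the moment
equals `N⁻¹ ∑_i ∏_j E|a δ_{ij} + b g|^{2 n_j}` with `a = e^{-t/2} √N` and `b = √(1 - e^{-t})`:
only the factor `j = i`, if any, carries the spike `a`. By dominated convergence
`E|a + b g|^{2m} ~ a^{2m} = (e^{-t} N)^m` as `a → ∞`. After normalisation by `N^{k - ∑ n_j}`,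
a spike at `j₀ < k` leaves the factor `N^{-∑_{j ≠ j₀} (n_j - 1)}` and the `N - k` spikes outside
the first `k` coordinates leave `N^{-∑_j (n_j - 1)}`; such a power survives in the limit only
when its exponent vanishes.
-/

open Real Finset

lemma stdCplxGaussian_eq_map :
    stdCplxGaussian =
      ((gaussianReal 0 (1 / 2)).prod (gaussianReal 0 (1 / 2))).map
        Complex.equivRealProdCLM.symm := by
  rw [stdCplxGaussian]
  congr 1
  ext p
  simp [Complex.equivRealProdCLM_symm_apply]

instance : IsGaussian stdCplxGaussian := by
  rw [stdCplxGaussian_eq_map]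
  infer_instance

lemma integral_sq_gaussianReal_zero (v : NNReal) : ∫ x, x ^ 2 ∂gaussianReal 0 v = v := by
  rw [← variance_fun_id_gaussianReal (μ := 0),
    variance_of_integral_eq_zero aemeasurable_id' integral_id_gaussianReal]

lemma integral_norm_sq_stdCplxGaussian : ∫ z, ‖z‖ ^ 2 ∂stdCplxGaussian = 1 := by
  have hint : Integrable (fun x : ℝ => x ^ 2) (gaussianReal 0 (1 / 2)) :=
    (memLp_id_gaussianReal 2).integrable_sq
  rw [stdCplxGaussian, integral_map (by fun_prop) (by fun_prop)]
  simp_rw [Complex.sq_norm, Complex.normSq_add_mul_I]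
  rw [integral_add (hint.comp_fst _) (hint.comp_snd _), integral_fun_fst (fun x => x ^ 2),
    integral_fun_snd (fun x => x ^ 2), integral_sq_gaussianReal_zero]
  norm_num

def shiftedMoment (b c : ℝ) (m : ℕ) : ℝ :=
  ∫ z, ‖(c : ℂ) + b * z‖ ^ (2 * m) ∂stdCplxGaussian

lemma integrable_norm_add_mul_pow (b c : ℝ) (p : ℕ) :
    Integrable (fun z : ℂ => ‖(c : ℂ) + b * z‖ ^ p) stdCplxGaussian :=
  ((memLp_const (c : ℂ)).add
    ((IsGaussian.memLp_id stdCplxGaussian p (by simp)).const_mul (b : ℂ))).integrable_norm_pow'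

lemma shiftedMoment_zero_right (b c : ℝ) : shiftedMoment b c 0 = 1 := by
  simp [shiftedMoment]

lemma shiftedMoment_zero_one (b : ℝ) : shiftedMoment b 0 1 = b ^ 2 := by
  simp_rw [shiftedMoment, Complex.ofReal_zero, zero_add, mul_one, norm_mul, mul_pow,
    Complex.norm_real, Real.norm_eq_abs, sq_abs]
  rw [integral_const_mul, integral_norm_sq_stdCplxGaussian, mul_one]

lemma tendsto_integral_norm_add_smul_pow {E : Type*} [NormedAddCommGroup E] [NormedSpace ℝ E]
    [MeasurableSpace E] {μ : Measure E} [IsProbabilityMeasure μ] {p : ℕ} (hμ : MemLp id p μ)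
    (x : E) : Tendsto (fun ε : ℝ => ∫ v, ‖x + ε • v‖ ^ p ∂μ) (𝓝 0) (𝓝 (‖x‖ ^ p)) := by
  have hcont : ContinuousAt (fun ε : ℝ => ∫ v, ‖x + ε • v‖ ^ p ∂μ) 0 := by
    refine continuousAt_of_dominated (bound := fun v => (‖x‖ + ‖v‖) ^ p) ?_ ?_ ?_ ?_
    · exact .of_forall fun ε => ((hμ.1.const_smul ε).const_add x).norm.pow p
    · filter_upwards [Metric.closedBall_mem_nhds (0 : ℝ) one_pos] with ε hε
      refine .of_forall fun v => ?_
      rw [Real.norm_of_nonneg (by positivity)]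
      have hε : ‖ε‖ ≤ 1 := by simpa using hε
      gcongr
      calc ‖x + ε • v‖ ≤ ‖x‖ + ‖ε‖ * ‖v‖ :=
            (norm_add_le _ _).trans_eq (by rw [norm_smul])
        _ ≤ ‖x‖ + ‖v‖ := by gcongr; exact mul_le_of_le_one_left (norm_nonneg _) hε
    · simpa [Real.norm_of_nonneg (add_nonneg (norm_nonneg x) (norm_nonneg _))] using
        ((memLp_const ‖x‖).add hμ.norm).integrable_norm_pow'
    · exact .of_forall fun v => by fun_prop
  simpa using hcont.tendsto

lemma tendsto_shiftedMoment_div_pow (b : ℝ) (m : ℕ) :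
    Tendsto (fun c : ℝ => shiftedMoment b c m / c ^ (2 * m)) atTop (𝓝 1) := by
  have hlim := (tendsto_integral_norm_add_smul_pow (p := 2 * m)
    (IsGaussian.memLp_id stdCplxGaussian _ (ENNReal.natCast_ne_top _)) (1 : ℂ)).comp
    (tendsto_const_nhds.div_atTop tendsto_id : Tendsto (fun c : ℝ => b / c) atTop (𝓝 0))
  rw [norm_one, one_pow] at hlim
  refine hlim.congr' ?_
  filter_upwards [eventually_gt_atTop 0] with c hc
  have hfactor : ∀ z : ℂ,
      ‖(c : ℂ) + b * z‖ ^ (2 * m) = c ^ (2 * m) * ‖1 + (b / c) • z‖ ^ (2 * m) := by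
    intro z
    have hc' : (c : ℂ) ≠ 0 := Complex.ofReal_ne_zero.mpr hc.ne'
    have : (c : ℂ) + b * z = c * (1 + (b / c : ℝ) • z) := by
      rw [Complex.real_smul]; push_cast; field_simp
    rw [this, norm_mul, mul_pow, Complex.norm_of_nonneg hc.le]
  simp_rw [Function.comp_apply, shiftedMoment, hfactor, integral_const_mul]
  rw [mul_div_cancel_left₀ _ (pow_pos hc _).ne']

lemma tendsto_shiftedMoment_mul_sqrt_div_pow (b : ℝ) {r : ℝ} (hr : 0 < r) (m : ℕ) :
    Tendsto (fun N : ℕ => shiftedMoment b (r * √N) m / (N : ℝ) ^ m) atTop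
      (𝓝 (r ^ (2 * m))) := by
  have hc : Tendsto (fun N : ℕ => r * √N) atTop atTop :=
    (tendsto_sqrt_atTop.comp tendsto_natCast_atTop_atTop).const_mul_atTop hr
  have hlim := ((tendsto_shiftedMoment_div_pow b m).comp hc).mul_const (r ^ (2 * m))
  rw [one_mul] at hlim
  refine hlim.congr' ?_
  filter_upwards [eventually_gt_atTop 0] with N hN
  have hpow : (r * √N) ^ (2 * m) = r ^ (2 * m) * (N : ℝ) ^ m := by
    rw [mul_pow, pow_mul (√_), Real.sq_sqrt (Nat.cast_nonneg N)]
  simp only [Function.comp_apply, hpow]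
  field_simp

lemma tendsto_natCast_zpow_neg_sum_sub_one {ι : Type*} (s : Finset ι) (m : ι → ℕ)
    (hm : ∀ j ∈ s, 1 ≤ m j) :
    Tendsto (fun N : ℕ => (N : ℝ) ^ (-∑ j ∈ s, ((m j : ℤ) - 1))) atTop
      (𝓝 (if ∀ j ∈ s, m j = 1 then 1 else 0)) := by
  split_ifs with h
  · rw [Finset.sum_eq_zero fun j hj => by simp [h j hj]]
    simp
  · obtain ⟨j, hj, hne⟩ := not_forall₂.mp h
    have hpos : 0 < ∑ j ∈ s, ((m j : ℤ) - 1) :=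
      Finset.sum_pos' (fun i hi => by have := hm i hi; omega) ⟨j, hj, by have := hm j hj; omega⟩
    exact (tendsto_zpow_atTop_zero (neg_neg_of_pos hpos)).comp tendsto_natCast_atTop_atTop

lemma integral_uniformFin_prod {N : ℕ} {β E : Type*} [MeasurableSpace β] [NormedAddCommGroup E]
    [NormedSpace ℝ E] {ν : Measure β} [SFinite ν] {f : Fin N × β → E}
    (hf : ∀ i, Integrable (fun y => f (i, y)) ν) :
    ∫ p, f p ∂(uniformFin N).prod ν = (N : ℝ)⁻¹ • ∑ i, ∫ y, f (i, y) ∂ν := by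
  have hmap : ∀ i : Fin N, (Measure.dirac i).prod ν = ν.map (Prod.mk i) := fun i =>
    Measure.dirac_prod i
  rw [uniformFin, Measure.prod_smul_left, integral_smul_measure, ← Measure.sum_fintype,
    Measure.prod_sum_left, Measure.sum_fintype, integral_finsetSum_measure, ENNReal.toReal_inv,
    ENNReal.toReal_natCast]
  · simp_rw [hmap, (measurableEmbedding_prodMk_left _).integral_map]
  · intro i _
    rw [hmap, (measurableEmbedding_prodMk_left i).integrable_map_iff]
    exact hf i

lemma prod_norm_entryV_pow {k d : ℕ} (n : Fin k → ℕ) (u : Fin (k + d) → ℂ) :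
    ∏ j : Fin k, ‖entryV u j‖ ^ (2 * n j) = ∏ l, ‖u l‖ ^ (2 * Fin.append n 0 l) := by
  have hentry : ∀ j : Fin k, entryV u j = u (Fin.castAdd d j) := fun j =>
    dif_pos (j.2.trans_le (Nat.le_add_right k d))
  simp [Fin.prod_univ_add, hentry]

lemma integral_prod_norm_add_mul_pow {ι : Type*} [Fintype ι] (b : ℝ) (c : ι → ℝ) (m : ι → ℕ) :
    ∫ g, ∏ l, ‖(c l : ℂ) + b * g l‖ ^ (2 * m l) ∂(Measure.pi fun _ : ι => stdCplxGaussian) =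
      ∏ l, shiftedMoment b (c l) (m l) :=
  integral_fintype_prod_eq_prod (fun l z => ‖(c l : ℂ) + b * z‖ ^ (2 * m l))

lemma sum_prod_shiftedMoment_append {k d : ℕ} (b a : ℝ) (n : Fin k → ℕ) :
    ∑ i : Fin (k + d), ∏ l, shiftedMoment b (if l = i then a else 0) (Fin.append n 0 l) =
      ∑ j₀, ∏ j, shiftedMoment b (if j = j₀ then a else 0) (n j) +
        d * ∏ j, shiftedMoment b 0 (n j) := by
  have hne : ∀ (j : Fin k) (i : Fin d), Fin.castAdd d j ≠ Fin.natAdd k i := fun j i h => by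
    have := congrArg Fin.val h
    simp only [Fin.val_castAdd, Fin.val_natAdd] at this
    omega
  simp [Fin.sum_univ_add, Fin.prod_univ_add, shiftedMoment_zero_right, hne]

lemma integral_prod_norm_entryV_pow_gaussModelLaw (t : ℝ) {k N : ℕ} (n : Fin k → ℕ)
    (hkN : k ≤ N) :
    ∫ u, ∏ j : Fin k, ‖entryV u j‖ ^ (2 * n j) ∂gaussModelLaw t N =
      (N : ℝ)⁻¹ * (∑ j₀, ∏ j, shiftedMoment (√(1 - exp (-t)))
          (if j = j₀ then exp (-t / 2) * √N else 0) (n j) +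
        ((N : ℝ) - k) * ∏ j, shiftedMoment (√(1 - exp (-t))) 0 (n j)) := by
  obtain ⟨d, rfl⟩ := Nat.exists_eq_add_of_le hkN
  have hshift : ∀ (a b : ℝ) (i l : Fin (k + d)) (z : ℂ),
      (a : ℂ) * (if l = i then 1 else 0) + b * z =
        ((if l = i then a else 0 : ℝ) : ℂ) + b * z := by
    intro a b i l z
    split_ifs <;> simp
  simp_rw [prod_norm_entryV_pow n]
  have hT : Measurable fun p : Fin (k + d) × (Fin (k + d) → ℂ) => fun j =>
      ((exp (-t / 2) * √(k + d : ℕ) : ℝ) : ℂ) * (if j = p.1 then 1 else 0) +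
        ((√(1 - exp (-t)) : ℝ) : ℂ) * p.2 j :=
    measurable_pi_lambda _ fun j => by
      have hδ : Measurable fun p : Fin (k + d) × (Fin (k + d) → ℂ) =>
          if j = p.1 then (1 : ℂ) else 0 :=
        (Measurable.of_discrete :
          Measurable fun i : Fin (k + d) => if j = i then (1 : ℂ) else 0).comp measurable_fst
      fun_prop
  have hF : Continuous fun u : Fin (k + d) → ℂ => ∏ l, ‖u l‖ ^ (2 * Fin.append n 0 l) := by
    fun_prop
  rw [gaussModelLaw, integral_map hT.aemeasurable hF.aestronglyMeasurable,
    integral_uniformFin_prod fun i => by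
    simp_rw [hshift]
    exact Integrable.fintype_prod fun l => integrable_norm_add_mul_pow _ _ _]
  simp_rw [hshift, integral_prod_norm_add_mul_pow, sum_prod_shiftedMoment_append]
  push_cast
  ring

def momentLimit (t : ℝ) {k : ℕ} (n : Fin k → ℕ) : ℝ :=
  ∑ j₀, (if ∀ j ∈ univ.erase j₀, n j = 1 then 1 else 0) * exp (-t / 2) ^ (2 * n j₀) *
      ∏ j ∈ univ.erase j₀, shiftedMoment (√(1 - exp (-t))) 0 (n j) +
    (if ∀ j ∈ univ, n j = 1 then 1 else 0) * ∏ j, shiftedMoment (√(1 - exp (-t))) 0 (n j)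

lemma tendsto_moment_gaussModelLaw (t : ℝ) {k : ℕ} (n : Fin k → ℕ) (hn : ∀ j, 1 ≤ n j) :
    Tendsto (fun N : ℕ => (N : ℝ) ^ ((k : ℤ) - ∑ j, (n j : ℤ)) *
        ∫ u, ∏ j : Fin k, ‖entryV u (j : ℕ)‖ ^ (2 * n j) ∂(gaussModelLaw t N)) atTop
      (𝓝 (momentLimit t n)) := by
  set b := √(1 - exp (-t)) with hb
  set P : Finset (Fin k) → ℝ := fun s => ∏ j ∈ s, shiftedMoment b 0 (n j)
  set D : Finset (Fin k) → ℤ := fun s => ∑ j ∈ s, ((n j : ℤ) - 1)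
  have hD : (k : ℤ) - ∑ j, (n j : ℤ) = -D univ := by simp [D, Finset.sum_sub_distrib]
  have hD_erase : ∀ j₀, -D univ - 1 = -D (univ.erase j₀) - n j₀ := fun j₀ => by
    simp only [D, ← Finset.add_sum_erase _ _ (mem_univ j₀)]
    ring
  have hprod : ∀ (a : ℝ) (j₀ : Fin k),
      ∏ j, shiftedMoment b (if j = j₀ then a else 0) (n j) =
        shiftedMoment b a (n j₀) * P (univ.erase j₀) := fun a j₀ => by
    rw [← Finset.mul_prod_erase _ _ (mem_univ j₀), if_pos rfl]
    congr 1
    exact Finset.prod_congr rfl fun j hj => by rw [if_neg (Finset.ne_of_mem_erase hj)]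
  have hev : ∀ᶠ N : ℕ in atTop,
      ∑ j₀, (N : ℝ) ^ (-D (univ.erase j₀)) *
          (shiftedMoment b (exp (-t / 2) * √N) (n j₀) / (N : ℝ) ^ n j₀) * P (univ.erase j₀) +
        (N : ℝ) ^ (-D univ) * (1 - k / N) * P univ =
      (N : ℝ) ^ ((k : ℤ) - ∑ j, (n j : ℤ)) *
        ∫ u, ∏ j : Fin k, ‖entryV u (j : ℕ)‖ ^ (2 * n j) ∂(gaussModelLaw t N) := by
    filter_upwards [eventually_ge_atTop k, eventually_gt_atTop 0] with N hkN hN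
    have hN' : (N : ℝ) ≠ 0 := by positivity
    have hzpow : ∀ j₀, (N : ℝ) ^ (-D univ) * (N : ℝ)⁻¹ =
        (N : ℝ) ^ (-D (univ.erase j₀)) / (N : ℝ) ^ n j₀ := fun j₀ => by
      rw [← zpow_sub_one₀ hN', hD_erase j₀, zpow_sub₀ hN', zpow_natCast]
    rw [integral_prod_norm_entryV_pow_gaussModelLaw t n hkN, ← hb, hD]
    simp only [hprod, mul_add, Finset.mul_sum]
    congr 1
    · refine Finset.sum_congr rfl fun j₀ _ => ?_
      rw [← mul_assoc, ← mul_assoc, hzpow j₀]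
      ring
    · simp only [P]
      field_simp
  have hspikes := tendsto_finsetSum univ fun j₀ _ =>
    ((tendsto_natCast_zpow_neg_sum_sub_one (univ.erase j₀) n fun j _ => hn j).mul
      (tendsto_shiftedMoment_mul_sqrt_div_pow b (exp_pos (-t / 2)) (n j₀))).mul_const
      (P (univ.erase j₀))
  have hbulk := ((tendsto_natCast_zpow_neg_sum_sub_one univ n fun j _ => hn j).mul
    ((tendsto_const_nhds (x := (1 : ℝ))).sub
      (tendsto_const_div_atTop_nhds_zero_nat (k : ℝ)))).mul_const (P univ)
  refine Tendsto.congr' hev ?_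
  convert hspikes.add hbulk using 2
  simp [momentLimit, P, hb]

lemma exp_neg_half_pow_two_mul (t : ℝ) (m : ℕ) : exp (-t / 2) ^ (2 * m) = exp (-m * t) := by
  rw [pow_mul, ← exp_nat_mul, ← exp_nat_mul]
  congr 1
  push_cast
  ring

lemma shiftedMoment_sqrt_one_sub_exp_zero_one {t : ℝ} (ht : 0 ≤ t) :
    shiftedMoment (√(1 - exp (-t))) 0 1 = 1 - exp (-t) := by
  rw [shiftedMoment_zero_one, sq_sqrt (sub_nonneg.2 (exp_le_one_iff.2 (by linarith)))]

lemma momentLimit_of_forall_eq_one {t : ℝ} (ht : 0 ≤ t) {k : ℕ} {n : Fin k → ℕ}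
    (h : ∀ j, n j = 1) :
    momentLimit t n = (1 - exp (-t)) ^ k + k * exp (-t) * (1 - exp (-t)) ^ (k - 1) := by
  simp only [momentLimit, h, exp_neg_half_pow_two_mul, mem_erase, ne_eq, mem_univ, and_true,
    implies_true, ↓reduceIte, Nat.cast_one, neg_mul, one_mul,
    shiftedMoment_sqrt_one_sub_exp_zero_one ht, prod_const, card_erase_of_mem, card_univ,
    Fintype.card_fin, sum_const, nsmul_eq_mul]
  ring

lemma momentLimit_of_two_le {t : ℝ} (ht : 0 ≤ t) {k : ℕ} {n : Fin k → ℕ} {j₀ : Fin k}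
    (h₀ : 2 ≤ n j₀) (h : ∀ j, j ≠ j₀ → n j = 1) :
    momentLimit t n = exp (-(n j₀ : ℝ) * t) * (1 - exp (-t)) ^ (k - 1) := by
  have hj₀ : ∀ j ∈ univ.erase j₀, n j = 1 := fun j hj => h j (Finset.ne_of_mem_erase hj)
  have hfalse : ∀ j₁ ≠ j₀, ¬ ∀ j ∈ univ.erase j₁, n j = 1 := fun j₁ hne hj => by
    have := hj j₀ (Finset.mem_erase.2 ⟨hne.symm, mem_univ _⟩); omega
  have hfalse' : ¬ ∀ j ∈ univ, n j = 1 := fun hj => by have := hj j₀ (mem_univ _); omega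
  rw [momentLimit, Finset.sum_eq_single j₀ (fun j₁ _ hne => by
      rw [if_neg (hfalse j₁ hne), zero_mul, zero_mul]) (by simp),
    if_pos hj₀, if_neg hfalse', Finset.prod_congr rfl fun j hj => by rw [hj₀ j hj],
    exp_neg_half_pow_two_mul]
  simp [shiftedMoment_sqrt_one_sub_exp_zero_one ht, Finset.card_erase_of_mem]

lemma momentLimit_of_two_le_of_two_le (t : ℝ) {k : ℕ} {n : Fin k → ℕ} {j₀ j₁ : Fin k}
    (hne : j₀ ≠ j₁) (h₀ : 2 ≤ n j₀) (h₁ : 2 ≤ n j₁) : momentLimit t n = 0 := by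
  have hfalse : ∀ j₂, ¬ ∀ j ∈ univ.erase j₂, n j = 1 := fun j₂ hj => by
    rcases eq_or_ne j₀ j₂ with rfl | h
    · have := hj j₁ (Finset.mem_erase.2 ⟨hne.symm, mem_univ _⟩); omega
    · have := hj j₀ (Finset.mem_erase.2 ⟨h, mem_univ _⟩); omega
  have hfalse' : ¬ ∀ j ∈ univ, n j = 1 := fun hj => by have := hj j₀ (mem_univ _); omega
  simp only [momentLimit, hfalse, hfalse', if_false]
  simp

theorem stmt12_general (t : ℝ) (ht : 0 ≤ t) (k : ℕ)
    (n : Fin k → ℕ) (hn : ∀ j, 1 ≤ n j) :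
    -- case n₁ = ⋯ = n_k = 1:
    ((∀ j, n j = 1) →
      Tendsto (fun N : ℕ => (N : ℝ) ^ ((k : ℤ) - ∑ j, (n j : ℤ)) *
          ∫ u, ∏ j : Fin k, ‖entryV u (j : ℕ)‖ ^ (2 * n j) ∂(gaussModelLaw t N)) atTop
        (𝓝 ((1 - Real.exp (-t)) ^ k +
            k * Real.exp (-t) * (1 - Real.exp (-t)) ^ (k - 1)))) ∧
    -- case where exactly one n_j is ≥ 2:
    (∀ j₀ : Fin k, 2 ≤ n j₀ → (∀ j, j ≠ j₀ → n j = 1) →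
      Tendsto (fun N : ℕ => (N : ℝ) ^ ((k : ℤ) - ∑ j, (n j : ℤ)) *
          ∫ u, ∏ j : Fin k, ‖entryV u (j : ℕ)‖ ^ (2 * n j) ∂(gaussModelLaw t N)) atTop
        (𝓝 (Real.exp (-(n j₀ : ℝ) * t) * (1 - Real.exp (-t)) ^ (k - 1)))) ∧
    -- case where at least two n_j are ≥ 2:
    (∀ j₀ j₁ : Fin k, j₀ ≠ j₁ → 2 ≤ n j₀ → 2 ≤ n j₁ →
      Tendsto (fun N : ℕ => (N : ℝ) ^ ((k : ℤ) - ∑ j, (n j : ℤ)) *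
          ∫ u, ∏ j : Fin k, ‖entryV u (j : ℕ)‖ ^ (2 * n j) ∂(gaussModelLaw t N)) atTop
        (𝓝 0)) := by
  have hlim := tendsto_moment_gaussModelLaw t n hn
  refine ⟨fun h => ?_, fun j₀ h₀ h => ?_, fun j₀ j₁ hne h₀ h₁ => ?_⟩
  · rwa [momentLimit_of_forall_eq_one ht h] at hlim
  · rwa [momentLimit_of_two_le ht h₀ h] at hlim
  · rwa [momentLimit_of_two_le_of_two_le t hne h₀ h₁] at hlim

theorem stmt12 (t : ℝ) (ht : 0 ≤ t) (k : ℕ) (hk : 1 ≤ k)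
    (n : Fin k → ℕ) (hn : ∀ j, 1 ≤ n j) :
    -- case n₁ = ⋯ = n_k = 1:
    ((∀ j, n j = 1) →
      Tendsto (fun N : ℕ => (N : ℝ) ^ ((k : ℤ) - ∑ j, (n j : ℤ)) *
          ∫ u, ∏ j : Fin k, ‖entryV u (j : ℕ)‖ ^ (2 * n j) ∂(gaussModelLaw t N)) atTop
        (𝓝 ((1 - Real.exp (-t)) ^ k +
            k * Real.exp (-t) * (1 - Real.exp (-t)) ^ (k - 1)))) ∧
    -- case where exactly one n_j is ≥ 2:
    (∀ j₀ : Fin k, 2 ≤ n j₀ → (∀ j, j ≠ j₀ → n j = 1) →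
      Tendsto (fun N : ℕ => (N : ℝ) ^ ((k : ℤ) - ∑ j, (n j : ℤ)) *
          ∫ u, ∏ j : Fin k, ‖entryV u (j : ℕ)‖ ^ (2 * n j) ∂(gaussModelLaw t N)) atTop
        (𝓝 (Real.exp (-(n j₀ : ℝ) * t) * (1 - Real.exp (-t)) ^ (k - 1)))) ∧
    -- case where at least two n_j are ≥ 2:
    (∀ j₀ j₁ : Fin k, j₀ ≠ j₁ → 2 ≤ n j₀ → 2 ≤ n j₁ →
      Tendsto (fun N : ℕ => (N : ℝ) ^ ((k : ℤ) - ∑ j, (n j : ℤ)) *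
          ∫ u, ∏ j : Fin k, ‖entryV u (j : ℕ)‖ ^ (2 * n j) ∂(gaussModelLaw t N)) atTop
        (𝓝 0)) :=
  stmt12_general t ht k n hn

end
end
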